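/- For every α ∈ Λ²₇ one has α ∧ α ∧ φ₀ = 2·|α|²·vol₇, where |α|² is the sum of the squares of the coefficients of α in the standard basis of 2-forms e*_i ∧ e*_j (i < j) dual to the coordinate basis of ℝ⁷. -/

import Mathlib

/-! Write `α = ι_vφ₀`. Its coefficient matrix `(α(eᵢ, eⱼ))` is the matrix of the cross product
with `v` on `ℝ⁷`, in which each `vₖ` occurs, up to sign, in exactly three of the 21 entries above
the diagonal; hence `|α|² = 3|v|²`. Expanding in coordinates gives `α ∧ α ∧ φ₀ = 6|v|² vol₇`, the
identity through which `φ₀` determines the Euclidean metric. The coefficients `a` of `α` are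
identified with that matrix because a coefficient of a 2-form is recovered by contracting twice. -/

/- We identify `(ℝ⁷)*` with `ℝ⁷` via the standard basis, so forms are elements of the exterior
algebra of `V7 = Fin 7 → ℝ` (wedge = multiplication).  A general 2-form is written (uniquely)
as `∑_{i<j} a i j • (ε i * ε j)`, and we quantify over its coefficient functions `a`. -/

noncomputable section
open ExteriorAlgebra

abbrev V7 : Type := Fin 7 → ℝ
abbrev E7 : Type := ExteriorAlgebra ℝ V7

def ε (i : Fin 7) : E7 := ExteriorAlgebra.ι ℝ (Pi.single i 1)

/-- Contraction (interior product) `ι_v` with the vector `v`, in the first slot. -/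
def ctr (v : V7) : E7 →ₗ[ℝ] E7 :=
  CliffordAlgebra.contractLeft ((Pi.basisFun ℝ (Fin 7)).toDual v)

def ω : E7 := ε 1 * ε 2 + ε 3 * ε 4 + ε 5 * ε 6
def ρ : E7 := -(ε 2 * ε 4 * ε 6) + ε 2 * ε 3 * ε 5 + ε 1 * ε 4 * ε 5 + ε 1 * ε 3 * ε 6
def φ₀ : E7 := ω * ε 0 + ρ
def vol7 : E7 := ε 0 * ε 1 * ε 2 * ε 3 * ε 4 * ε 5 * ε 6

/-- The linear map `v ↦ ι_vφ₀`. -/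
def iotaPhi : V7 →ₗ[ℝ] E7 :=
  ((CliffordAlgebra.contractLeft (Q := (0 : QuadraticForm ℝ V7))).flip φ₀) ∘ₗ
    (Pi.basisFun ℝ (Fin 7)).toDual

/-- `Λ²₇ = {ι_vφ₀ : v ∈ ℝ⁷}`. -/
def Λ27 : Submodule ℝ E7 := LinearMap.range iotaPhi

lemma Pi.basisFun_toDual_apply_single {R ι : Type*} [CommRing R] [Fintype ι] [DecidableEq ι]
    (v : ι → R) (i : ι) : (Pi.basisFun R ι).toDual v (Pi.single i 1) = v i := by
  simpa using (Pi.basisFun R ι).toDual_apply_left v i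

lemma ε_mul_self (i : Fin 7) : ε i * ε i = 0 := ι_sq_zero _

lemma ε_mul_ε_mul_self (i : Fin 7) (x : E7) : ε i * (ε i * x) = 0 := by
  rw [← mul_assoc, ε_mul_self, zero_mul]

lemma ε_mul_ε_comm (i j : Fin 7) : ε i * ε j = -(ε j * ε i) :=
  eq_neg_of_add_eq_zero_left (ι_add_mul_swap _ _)

/- The order hypotheses let `simp` sort monomials in the `ε i` without looping. -/

lemma ε_mul_ε_of_lt {i j : Fin 7} (_ : j < i) : ε i * ε j = -(ε j * ε i) := ε_mul_ε_comm i j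

lemma ε_mul_ε_mul_of_lt {i j : Fin 7} (_ : j < i) (x : E7) :
    ε i * (ε j * x) = -(ε j * (ε i * x)) := by
  rw [← mul_assoc, ε_mul_ε_comm i j, ← mul_assoc, neg_mul]

lemma ctr_one (v : V7) : ctr v 1 = 0 := CliffordAlgebra.contractLeft_one 0 _

lemma ctr_ε (v : V7) (i : Fin 7) : ctr v (ε i) = algebraMap ℝ E7 (v i) := by
  have h := CliffordAlgebra.contractLeft_ι (Q := (0 : QuadraticForm ℝ V7))
    ((Pi.basisFun ℝ (Fin 7)).toDual v) (Pi.single i 1)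
  rwa [Pi.basisFun_toDual_apply_single] at h

lemma ctr_ε_mul (v : V7) (i : Fin 7) (x : E7) :
    ctr v (ε i * x) = v i • x - ε i * ctr v x := by
  have h := CliffordAlgebra.contractLeft_ι_mul (Q := (0 : QuadraticForm ℝ V7))
    ((Pi.basisFun ℝ (Fin 7)).toDual v) (Pi.single i 1) x
  rwa [Pi.basisFun_toDual_apply_single] at h

def twoForm (a : Fin 7 → Fin 7 → ℝ) : E7 := ∑ i, ∑ j, if i < j then a i j • (ε i * ε j) else 0

def coeff (i j : Fin 7) : E7 →ₗ[ℝ] ℝ :=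
  algebraMapInv.toLinearMap ∘ₗ ctr (Pi.single j 1) ∘ₗ ctr (Pi.single i 1)

lemma coeff_ε_mul_ε (i j k l : Fin 7) :
    coeff i j (ε k * ε l) = (if k = i ∧ l = j then 1 else 0) - (if l = i ∧ k = j then 1 else 0) := by
  simp only [coeff, LinearMap.comp_apply, ctr_ε_mul, ctr_ε, map_sub, map_smul, Pi.single_apply]
  split_ifs <;> simp_all [ctr_one]

lemma coeff_twoForm (a : Fin 7 → Fin 7 → ℝ) {i j : Fin 7} (hij : i < j) :
    coeff i j (twoForm a) = a i j := by
  have hterm : ∀ k l : Fin 7, (if k < l then a k l * ((if k = i ∧ l = j then 1 else 0) -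
      (if l = i ∧ k = j then 1 else 0)) else 0) = if k = i ∧ l = j then a i j else 0 := by
    intro k l
    split_ifs <;> grind
  simp only [twoForm, map_sum, apply_ite (coeff i j), map_smul, map_zero, coeff_ε_mul_ε,
    smul_eq_mul, hterm]
  simp [ite_and]

lemma eq_of_twoForm_eq {a b : Fin 7 → Fin 7 → ℝ} (h : twoForm a = twoForm b) {i j : Fin 7}
    (hij : i < j) : a i j = b i j := by
  rw [← coeff_twoForm a hij, h, coeff_twoForm b hij]

/- The entry `(i, j)` is `φ₀(v, eᵢ, eⱼ)`, i.e. `⟨v × eᵢ, eⱼ⟩` for the cross product on `ℝ⁷`. -/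
def iotaPhiCoeff (v : V7) : Fin 7 → Fin 7 → ℝ :=
  !![0, v 2, -v 1, v 4, -v 3, v 6, -v 5;
    -v 2, 0, v 0, v 6, v 5, -v 4, -v 3;
    v 1, -v 0, 0, v 5, -v 6, -v 3, v 4;
    -v 4, -v 6, -v 5, 0, v 0, v 2, v 1;
    v 3, -v 5, v 6, -v 0, 0, v 1, -v 2;
    -v 6, v 4, v 3, -v 2, -v 1, 0, v 0;
    v 5, v 3, -v 4, -v 1, v 2, -v 0, 0]

lemma iotaPhi_eq_twoForm (v : V7) : iotaPhi v = twoForm (iotaPhiCoeff v) := by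
  change ctr v φ₀ = _
  simp only [φ₀, ω, ρ, add_mul, mul_assoc, map_add, map_neg, ctr_ε_mul, ctr_ε,
    Algebra.algebraMap_eq_smul_one, mul_smul_comm, mul_one, mul_sub]
  conv_rhs => simp only [twoForm, iotaPhiCoeff, Fin.isValue, Matrix.of_apply, Matrix.cons_val',
      Matrix.cons_val_fin_one, Fin.sum_univ_seven, not_lt_zero, ↓reduceIte, Fin.lt_one_iff,
      Nat.reduceAdd, Matrix.cons_val_one, Matrix.cons_val_zero, zero_add, Matrix.cons_val,
      Fin.reduceLT, neg_smul, one_ne_zero, Fin.reduceEq, lt_self_iff_false, add_zero]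
  simp (config := { decide := true }) only [ε_mul_ε_of_lt, smul_neg, sub_eq_add_neg]
  module

lemma sum_sq_iotaPhiCoeff (v : V7) :
    (∑ i, ∑ j, if i < j then iotaPhiCoeff v i j ^ 2 else 0) = 3 * ∑ k, v k ^ 2 := by
  simp [Fin.sum_univ_seven, iotaPhiCoeff]
  ring

set_option maxHeartbeats 1000000 in
lemma iotaPhi_mul_iotaPhi_mul_φ₀ (v : V7) :
    iotaPhi v * iotaPhi v * φ₀ = (6 * ∑ k, v k ^ 2) • vol7 := by
  rw [iotaPhi_eq_twoForm]
  simp only [twoForm, iotaPhiCoeff, Fin.isValue, Matrix.of_apply, Matrix.cons_val',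
    Matrix.cons_val_fin_one, Fin.sum_univ_seven, not_lt_zero, ↓reduceIte, Fin.lt_one_iff,
    Nat.reduceAdd, Matrix.cons_val_one, Matrix.cons_val_zero, zero_add, Matrix.cons_val,
    Fin.reduceLT, neg_smul, one_ne_zero, Fin.reduceEq, lt_self_iff_false, add_zero]
  simp only [φ₀, ω, ρ, vol7, mul_add, add_mul, neg_mul, mul_neg, smul_mul_assoc, mul_smul_comm,
    mul_assoc]
  simp (config := { decide := true }) only [ε_mul_self, ε_mul_ε_mul_self, ε_mul_ε_of_lt,
    ε_mul_ε_mul_of_lt, smul_neg, smul_zero, mul_zero, add_zero, zero_add, neg_neg,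
    mul_neg, neg_zero, smul_smul]
  module

theorem stmt2 (a : Fin 7 → Fin 7 → ℝ)
    (hα : (∑ i, ∑ j, if i < j then a i j • (ε i * ε j) else 0) ∈ Λ27) :
    (∑ i, ∑ j, if i < j then a i j • (ε i * ε j) else 0) *
        (∑ i, ∑ j, if i < j then a i j • (ε i * ε j) else 0) * φ₀ =
      (2 * ∑ i, ∑ j, if i < j then (a i j) ^ 2 else 0) • vol7 := by
  obtain ⟨v, hv⟩ : ∃ v, iotaPhi v = twoForm a := hα
  have hnorm : (∑ i, ∑ j, if i < j then a i j ^ 2 else 0) = 3 * ∑ k, v k ^ 2 := by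
    rw [← sum_sq_iotaPhiCoeff]
    refine Finset.sum_congr rfl fun i _ => Finset.sum_congr rfl fun j _ => ?_
    split_ifs with hij
    · rw [← eq_of_twoForm_eq ((iotaPhi_eq_twoForm v).symm.trans hv) hij]
    · rfl
  change twoForm a * twoForm a * φ₀ = _
  rw [hnorm, ← hv, iotaPhi_mul_iotaPhi_mul_φ₀]
  congr 1
  ring
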